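/- arXiv:1309.6910 — 6 statements merged into one kernel-verified Lean document; each statement's English description precedes it below -/
import Mathlib

section
/- The polynomial T_n(x, y) depends only on the sum x + y: for every natural number n and all complex numbers x, y, x', y' with x + y = x' + y', one has T_n(x, y) = T_n(x', y'). -/
/-!
With `p k z = (k + z)^k`, `T n x y` is the binomial convolution of `p` with itself, and `p k`
has derivative `k * p (k-1) (· + 1)`. Differentiating `u ↦ T (n+1) u (s-u)` and absorbing the
factors `m` and `n+1-m` into the binomial coefficients gives
`(n+1) (T n (u+1) (s-u) - T n u (s-u+1))`, which vanishes by induction on `n`; so `T n` is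
constant on every line `x + y = s`.
-/

open Finset

/-- The two-variable polynomial
`T n x y = ∑_{m=0}^{n} C(n,m) (m+x)^m (n-m+y)^(n-m)` (with `0^0 = 1`). -/
noncomputable def T (n : ℕ) (x y : ℂ) : ℂ :=
  ∑ m ∈ Finset.range (n + 1),
    (n.choose m : ℂ) * ((m : ℂ) + x) ^ m * (((n - m : ℕ) : ℂ) + y) ^ (n - m)

section BinomialConvolution

variable {R : Type*} [CommRing R] (f g : ℕ → R) (n : ℕ)

theorem sum_choose_succ_mul_left_shift :
    ∑ m ∈ range (n + 2), ((n + 1).choose m : R) * ((m : R) * f (m - 1)) * g (n + 1 - m) =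
      (n + 1) * ∑ m ∈ range (n + 1), (n.choose m : R) * f m * g (n - m) := by
  rw [sum_range_succ', mul_sum]
  simp only [Nat.cast_zero, zero_mul, mul_zero, add_zero, add_tsub_cancel_right,
    Nat.add_sub_add_right]
  refine sum_congr rfl fun m _ => ?_
  have hchoose : ((n + 1).choose (m + 1) : R) * (m + 1) = (n + 1) * n.choose m := by
    exact_mod_cast congrArg (Nat.cast : ℕ → R) (Nat.add_one_mul_choose_eq n m).symm
  push_cast
  linear_combination (f m * g (n - m)) * hchoose

theorem sum_choose_succ_mul_right_shift :
    ∑ m ∈ range (n + 2), ((n + 1).choose m : R) * f m * (((n + 1 - m : ℕ) : R) * g (n - m)) =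
      (n + 1) * ∑ m ∈ range (n + 1), (n.choose m : R) * f m * g (n - m) := by
  rw [sum_range_succ, mul_sum]
  simp only [Nat.sub_self, Nat.cast_zero, zero_mul, mul_zero, add_zero]
  refine sum_congr rfl fun m _ => ?_
  have hchoose : ((n + 1).choose m : R) * (n + 1 - m : ℕ) = (n + 1) * n.choose m := by
    exact_mod_cast congrArg (Nat.cast : ℕ → R)
      ((Nat.choose_mul_succ_eq n m).symm.trans (mul_comm _ _))
  linear_combination (f m * g (n - m)) * hchoose

end BinomialConvolution

noncomputable def abelPow (k : ℕ) (z : ℂ) : ℂ := ((k : ℂ) + z) ^ k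

theorem T_eq_sum_abelPow (n : ℕ) (x y : ℂ) :
    T n x y = ∑ m ∈ range (n + 1), (n.choose m : ℂ) * abelPow m x * abelPow (n - m) y :=
  rfl

theorem hasDerivAt_abelPow (k : ℕ) (z : ℂ) :
    HasDerivAt (abelPow k) (k * abelPow (k - 1) (z + 1)) z := by
  unfold abelPow
  cases k with
  | zero => simpa using hasDerivAt_const z (1 : ℂ)
  | succ k =>
    have hshift : (k : ℂ) + (z + 1) = ((k + 1 : ℕ) : ℂ) + z := by push_cast; ring
    simpa [hshift] using ((hasDerivAt_id z).const_add ((k + 1 : ℕ) : ℂ)).fun_pow (k + 1)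

theorem hasDerivAt_T_succ_antidiagonal (n : ℕ) (s u : ℂ) :
    HasDerivAt (fun v => T (n + 1) v (s - v))
      ((n + 1) * T n (u + 1) (s - u) - (n + 1) * T n u (s - u + 1)) u := by
  have hterm (m : ℕ) : HasDerivAt (fun v => ((n + 1).choose m : ℂ) * abelPow m v *
      abelPow (n + 1 - m) (s - v))
      (((n + 1).choose m : ℂ) * (m * abelPow (m - 1) (u + 1)) * abelPow (n + 1 - m) (s - u) -
        ((n + 1).choose m : ℂ) * abelPow m u *
          (((n + 1 - m : ℕ) : ℂ) * abelPow (n - m) (s - u + 1))) u := by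
    have hright := (hasDerivAt_abelPow (n + 1 - m) (s - u)).comp u ((hasDerivAt_id u).const_sub s)
    have hsub : n + 1 - m - 1 = n - m := by omega
    rw [hsub] at hright
    exact (((hasDerivAt_abelPow m u).const_mul _).mul hright).congr_deriv
      (by simp only [Function.comp_apply]; ring)
  simp only [T_eq_sum_abelPow]
  refine (HasDerivAt.fun_sum fun m (_ : m ∈ range (n + 2)) => hterm m).congr_deriv ?_
  rw [sum_sub_distrib, sum_choose_succ_mul_left_shift (abelPow · (u + 1)) (abelPow · (s - u)),
    sum_choose_succ_mul_right_shift (abelPow · u) (abelPow · (s - u + 1))]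

theorem T_depends_only_on_sum (n : ℕ) (x y x' y' : ℂ) (h : x + y = x' + y') :
    T n x y = T n x' y' := by
  induction n generalizing x y x' y' with
  | zero => simp [T]
  | succ n ih =>
    have hderiv (u : ℂ) : HasDerivAt (fun v => T (n + 1) v (x + y - v)) 0 u := by
      simpa [ih (u + 1) (x + y - u) u (x + y - u + 1) (by ring)] using
        hasDerivAt_T_succ_antidiagonal n (x + y) u
    have hconst := is_const_of_deriv_eq_zero (fun u => (hderiv u).differentiableAt)
      (fun u => (hderiv u).deriv) x x'
    obtain rfl : y' = x + y - x' := by linear_combination -h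
    simpa using hconst
end

section
/- For every natural number n \geq 1 and every complex number z, the function x \mapsto T_n(x, z - x) is complex-differentiable at every point x \in \mathbb{C}, with derivative equal to n \cdot ( T_{n-1}(1 + x, z - x) - T_{n-1}(x, z + 1 - x) ). -/
open Finset

/-!
Differentiate `T n x (z - x)` term by term. The product rule splits the result into two sums,
and the absorption identities `m * C(n, m) = n * C(n - 1, m - 1)` and
`(n - m) * C(n, m) = n * C(n - 1, m)` turn them into `n * T (n - 1) (1 + x) (z - x)` and
`n * T (n - 1) x (1 + (z - x))`.
-/

theorem sum_termwise_deriv_fst_T_succ (n : ℕ) (x y : ℂ) :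
    ∑ m ∈ range (n + 2), ((n + 1).choose m : ℂ) * (m * ((m : ℂ) + x) ^ (m - 1)) *
      (((n + 1 - m : ℕ) : ℂ) + y) ^ (n + 1 - m) = (n + 1) * T n (1 + x) y := by
  rw [sum_range_succ', T, mul_sum]
  simp only [CharP.cast_eq_zero, zero_mul, mul_zero, add_zero, Nat.add_sub_cancel,
    Nat.add_sub_add_right]
  refine sum_congr rfl fun m _ => ?_
  have hchoose : ((n + 1).choose (m + 1) : ℂ) * (m + 1) = (n + 1) * n.choose m := by
    exact_mod_cast (Nat.add_one_mul_choose_eq n m).symm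
  push_cast
  linear_combination ((m + 1 + x) ^ m * (((n - m : ℕ) : ℂ) + y) ^ (n - m)) * hchoose

theorem sum_termwise_deriv_snd_T_succ (n : ℕ) (x y : ℂ) :
    ∑ m ∈ range (n + 2), ((n + 1).choose m : ℂ) * ((m : ℂ) + x) ^ m *
      (((n + 1 - m : ℕ) : ℂ) * (((n + 1 - m : ℕ) : ℂ) + y) ^ (n - m)) =
      (n + 1) * T n x (1 + y) := by
  rw [sum_range_succ, T, mul_sum]
  simp only [Nat.sub_self, CharP.cast_eq_zero, zero_mul, mul_zero, add_zero]
  refine sum_congr rfl fun m hmem => ?_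
  have hm : n + 1 - m = n - m + 1 := by have := mem_range.mp hmem; omega
  have hchoose : ((n + 1).choose m : ℂ) * ((n - m : ℕ) + 1) = n.choose m * (n + 1) := by
    exact_mod_cast (hm ▸ Nat.choose_mul_succ_eq n m).symm
  rw [hm]
  push_cast
  linear_combination ((m + x) ^ m * (((n - m : ℕ) : ℂ) + 1 + y) ^ (n - m)) * hchoose

theorem hasDerivAt_T (n : ℕ) (hn : 1 ≤ n) (z x : ℂ) :
    HasDerivAt (fun x : ℂ => T n x (z - x))
      ((n : ℂ) * (T (n - 1) (1 + x) (z - x) - T (n - 1) x (z + 1 - x))) x := by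
  obtain ⟨n, rfl⟩ := Nat.exists_eq_add_of_le' hn
  have hterm : ∀ m ∈ range (n + 2), HasDerivAt
      (fun x : ℂ => ((n + 1).choose m : ℂ) * ((m : ℂ) + x) ^ m *
        (((n + 1 - m : ℕ) : ℂ) + (z - x)) ^ (n + 1 - m))
      (((n + 1).choose m : ℂ) * (m * ((m : ℂ) + x) ^ (m - 1)) *
          (((n + 1 - m : ℕ) : ℂ) + (z - x)) ^ (n + 1 - m) -
        ((n + 1).choose m : ℂ) * ((m : ℂ) + x) ^ m *
          (((n + 1 - m : ℕ) : ℂ) * (((n + 1 - m : ℕ) : ℂ) + (z - x)) ^ (n - m))) x := by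
    intro m _
    have hleft := (((hasDerivAt_id x).const_add (m : ℂ)).pow m).const_mul ((n + 1).choose m : ℂ)
    have hright :=
      (((hasDerivAt_id x).const_sub z).const_add ((n + 1 - m : ℕ) : ℂ)).pow (n + 1 - m)
    refine (hleft.mul hright).congr_deriv ?_
    rw [Nat.sub_right_comm, Nat.add_sub_cancel]
    simp only [id, Pi.pow_apply, mul_one]
    ring
  refine (HasDerivAt.fun_sum hterm).congr_deriv ?_
  rw [sum_sub_distrib, sum_termwise_deriv_fst_T_succ, sum_termwise_deriv_snd_T_succ,
    Nat.add_sub_cancel, show z + 1 - x = 1 + (z - x) by ring]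
  push_cast
  ring
end

section
/- The polynomial \mathcal{T}_n satisfies the recurrence \mathcal{T}_n(z) = (z + n)^n + n \cdot \mathcal{T}_{n-1}(z + 1) for every natural number n \geq 1 and every complex number z, together with the initial condition \mathcal{T}_0(z) = 1. -/
/-!
Put `w = z + n`, so that `𝒯 n z = ∑ₘ C(n,m) mᵐ (w - m)ⁿ⁻ᵐ`. Expanding `(w - m)ⁿ⁻ᵐ` and using
`C(n,m) C(n-m,j-m) = C(n,j) C(j,m)`, the coefficient of `wⁿ⁻ʲ` is
`C(n,j) ∑ₘ C(j,m) (-1)ʲ⁻ᵐ mʲ`, and this alternating sum is the `j`-th forward difference of `xʲ`,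
namely `j!`. Hence `𝒯 n z = ∑ⱼ n(n-1)⋯(n-j+1) (z + n)ⁿ⁻ʲ`, and the recurrence follows by
splitting off `j = 0` and factoring `n` out of the remaining falling factorials.
-/

open Finset

/-- The polynomial `𝒯 n z = ∑_{m=0}^{n} C(n,m) m^m (n-m+z)^(n-m)` (with `0^0 = 1`). -/
noncomputable def calT (n : ℕ) (z : ℂ) : ℂ :=
  ∑ m ∈ Finset.range (n + 1),
    (n.choose m : ℂ) * (m : ℂ) ^ m * (((n - m : ℕ) : ℂ) + z) ^ (n - m)

open scoped Nat

section CommRing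

variable {R : Type*} [CommRing R]

theorem sum_choose_mul_pow_self_mul_neg_pow (n : ℕ) :
    ∑ m ∈ range (n + 1), (n.choose m : R) * m ^ m * (-m) ^ (n - m) = n ! := by
  have h := fwdDiff_iter_eq_sum_shift (h := (1 : R)) (fun r ↦ r ^ n) n 0
  rw [fwdDiff_iter_eq_factorial] at h
  simp only [zero_add, nsmul_one, zsmul_eq_mul, Int.cast_mul, Int.cast_pow, Int.cast_neg,
    Int.cast_one, Int.cast_natCast, Pi.natCast_apply] at h
  rw [h]
  refine sum_congr rfl fun m hm ↦ ?_
  rw [neg_pow, mul_mul_mul_comm, ← pow_add, Nat.add_sub_cancel' (mem_range_succ_iff.mp hm)]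
  ring

theorem sum_choose_mul_pow_self_mul_sub_pow (n : ℕ) (w : R) :
    ∑ m ∈ range (n + 1), (n.choose m : R) * m ^ m * (w - m) ^ (n - m) =
      ∑ j ∈ range (n + 1), (n.descFactorial j : R) * w ^ (n - j) := by
  have expand : ∀ m ∈ range (n + 1), (n.choose m : R) * m ^ m * (w - m) ^ (n - m) =
      ∑ j ∈ Ico m (n + 1), n.choose j * (j.choose m * m ^ m * (-m) ^ (j - m)) * w ^ (n - j) := by
    intro m hm
    have hchoose (l : ℕ) : (n.choose (m + l) : R) * (m + l).choose m = n.choose m * (n - m).choose l := by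
      have := Nat.choose_mul (n := n) (Nat.le_add_right m l)
      rw [Nat.add_sub_cancel_left] at this
      exact_mod_cast congrArg (Nat.cast : ℕ → R) this
    rw [sum_Ico_eq_sum_range, Nat.sub_add_comm (mem_range_succ_iff.mp hm), sub_eq_neg_add,
      add_pow, mul_sum]
    refine sum_congr rfl fun l _ ↦ ?_
    rw [Nat.add_sub_cancel_left, Nat.sub_add_eq]
    linear_combination -(m : R) ^ m * (-m) ^ l * w ^ (n - m - l) * hchoose l
  rw [sum_congr rfl expand, range_eq_Ico, sum_Ico_Ico_comm, ← range_eq_Ico]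
  refine sum_congr rfl fun j _ ↦ ?_
  rw [← sum_mul, ← mul_sum, ← range_eq_Ico, sum_choose_mul_pow_self_mul_neg_pow,
    Nat.descFactorial_eq_factorial_mul_choose]
  push_cast
  ring

theorem sum_descFactorial_mul_pow_succ (n : ℕ) (w : R) :
    ∑ j ∈ range (n + 2), ((n + 1).descFactorial j : R) * w ^ (n + 1 - j) =
      w ^ (n + 1) + (n + 1) * ∑ j ∈ range (n + 1), (n.descFactorial j : R) * w ^ (n - j) := by
  rw [sum_range_succ', mul_sum, add_comm]
  simp only [Nat.succ_descFactorial_succ, Nat.add_sub_add_right, Nat.descFactorial_zero]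
  push_cast
  simp only [one_mul, mul_assoc]

end CommRing

theorem calT_eq_sum_descFactorial (n : ℕ) (z : ℂ) :
    calT n z = ∑ j ∈ range (n + 1), (n.descFactorial j : ℂ) * (z + n) ^ (n - j) := by
  rw [← sum_choose_mul_pow_self_mul_sub_pow, calT]
  refine sum_congr rfl fun m hm ↦ ?_
  rw [Nat.cast_sub (mem_range_succ_iff.mp hm), sub_add_eq_add_sub, add_comm (n : ℂ)]

theorem calT_recurrence :
    (∀ n : ℕ, 1 ≤ n → ∀ z : ℂ,
      calT n z = (z + n) ^ n + (n : ℂ) * calT (n - 1) (z + 1)) ∧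
    (∀ z : ℂ, calT 0 z = 1) := by
  refine ⟨fun n hn z ↦ ?_, fun z ↦ by simp [calT]⟩
  obtain ⟨n, rfl⟩ := Nat.exists_eq_add_of_le' hn
  rw [Nat.add_sub_cancel, calT_eq_sum_descFactorial, calT_eq_sum_descFactorial,
    sum_descFactorial_mul_pow_succ]
  push_cast
  ring_nf
end

section
/- For every natural number n and every complex number z, the polynomial \mathcal{T}_n admits the expansion in powers of (z + n): \mathcal{T}_n(z) = \sum_{k=0}^{n} \frac{n!}{k!} (z + n)^k. -/
open Finset

/-!
In the variable `w = z + n`, both sides are polynomials `P n` and `Q n` satisfying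
`(P (n + 1))' = (n + 1) P n` and `P n (0) = n!`, and such a family is determined by these
conditions in characteristic zero. For the right-hand side this is immediate; for `𝒯` the
derivative identity is `C(n+1, m) (n+1-m) = (n+1) C(n, m)` termwise, and the value at `w = 0`
is `∑ (-1)^(n-m) C(n,m) m^n`, the `n`-th forward difference of `x ↦ x^n`, which is `n!`.
-/

open Polynomial Nat

section CommRing

variable (R : Type*) [CommRing R]

noncomputable def calTPoly (n : ℕ) : R[X] :=
  ∑ m ∈ range (n + 1), C ((n.choose m : R) * (m : R) ^ m) * (X - C (m : R)) ^ (n - m)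

variable {R}

theorem sum_neg_one_pow_mul_choose_mul_pow_self (n : ℕ) :
    ∑ k ∈ range (n + 1), (-1 : R) ^ (n - k) * n.choose k * (k : R) ^ n = n ! := by
  have h := congrFun (fwdDiff_iter_eq_factorial (R := R) (n := n)) 0
  rw [fwdDiff_iter_eq_sum_shift] at h
  simpa [zsmul_eq_mul] using h

theorem eval_zero_calTPoly (n : ℕ) : (calTPoly R n).eval 0 = n ! := by
  rw [← sum_neg_one_pow_mul_choose_mul_pow_self, calTPoly, eval_finsetSum]
  refine sum_congr rfl fun m hm ↦ ?_
  have hmn : m + (n - m) = n := Nat.add_sub_cancel' (Nat.lt_succ_iff.mp (mem_range.mp hm))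
  have hpow : (m : R) ^ n = (m : R) ^ m * (m : R) ^ (n - m) := by rw [← pow_add, hmn]
  simp only [eval_mul, eval_C, eval_pow, eval_sub, eval_X, zero_sub]
  rw [neg_pow, hpow]
  ring

theorem derivative_calTPoly_succ (n : ℕ) :
    derivative (calTPoly R (n + 1)) = C ((n : R) + 1) * calTPoly R n := by
  -- the added term `m = n + 1` vanishes because `n.choose (n + 1) = 0`
  have hextend : calTPoly R n = ∑ m ∈ range (n + 1 + 1),
      C ((n.choose m : R) * (m : R) ^ m) * (X - C (m : R)) ^ (n - m) := by
    simp [calTPoly, sum_range_succ _ (n + 1)]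
  rw [hextend, calTPoly, mul_sum, derivative_sum]
  refine sum_congr rfl fun m _ ↦ ?_
  have hchoose : ((n + 1).choose m : R) * ((n + 1 - m : ℕ) : R) = ((n : R) + 1) * n.choose m := by
    norm_cast
    rw [← Nat.choose_mul_succ_eq, mul_comm]
  rw [derivative_C_mul, derivative_pow, derivative_sub, derivative_X, derivative_C, sub_zero,
    mul_one, Nat.sub_right_comm, Nat.add_sub_cancel, ← mul_assoc, ← mul_assoc, ← C_mul, ← C_mul]
  congr 2
  linear_combination (m : R) ^ m * hchoose

end CommRing

theorem Polynomial.eq_of_derivative_eq_of_eval_zero_eq {R : Type*} [Ring R] [IsAddTorsionFree R]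
    {p q : R[X]} (hd : derivative p = derivative q) (h0 : p.eval 0 = q.eval 0) : p = q := by
  have h := eq_C_of_derivative_eq_zero (p := p - q) (by rw [derivative_sub, hd, sub_self])
  rwa [coeff_zero_eq_eval_zero, eval_sub, h0, sub_self, map_zero, sub_eq_zero] at h

section Field

variable (K : Type*) [Field K]

noncomputable def factorialExpTrunc (n : ℕ) : K[X] :=
  ∑ k ∈ range (n + 1), C ((n ! : K) / k !) * X ^ k

variable {K}

theorem eval_zero_factorialExpTrunc (n : ℕ) : (factorialExpTrunc K n).eval 0 = n ! := by
  rw [factorialExpTrunc, eval_finsetSum, sum_eq_single_of_mem 0 (by simp)]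
  · simp
  · intro k _ hk
    simp [hk]

theorem derivative_factorialExpTrunc_succ [CharZero K] (n : ℕ) :
    derivative (factorialExpTrunc K (n + 1)) = C ((n : K) + 1) * factorialExpTrunc K n := by
  rw [factorialExpTrunc, factorialExpTrunc, derivative_sum, sum_range_succ', mul_sum]
  simp only [derivative_C_mul_X_pow, pow_zero, mul_one, derivative_C, add_zero]
  refine sum_congr rfl fun k _ ↦ ?_
  rw [← mul_assoc, ← C_mul, Nat.add_sub_cancel]
  congr 2
  push_cast [factorial_succ]
  field_simp

theorem calTPoly_eq_factorialExpTrunc [CharZero K] (n : ℕ) :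
    calTPoly K n = factorialExpTrunc K n := by
  induction n with
  | zero => simp [calTPoly, factorialExpTrunc]
  | succ n ih =>
    refine eq_of_derivative_eq_of_eval_zero_eq ?_ ?_
    · rw [derivative_calTPoly_succ, derivative_factorialExpTrunc_succ, ih]
    · rw [eval_zero_calTPoly, eval_zero_factorialExpTrunc]

end Field

theorem calT_eq_eval_calTPoly (n : ℕ) (z : ℂ) : calT n z = (calTPoly ℂ n).eval (z + n) := by
  rw [calT, calTPoly, eval_finsetSum]
  refine sum_congr rfl fun m hm ↦ ?_
  rw [Nat.cast_sub (Nat.lt_succ_iff.mp (mem_range.mp hm))]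
  simp only [eval_mul, eval_C, eval_pow, eval_sub, eval_X]
  ring

theorem calT_expansion (n : ℕ) (z : ℂ) :
    calT n z = ∑ k ∈ Finset.range (n + 1), ((n.factorial : ℂ) / (k.factorial : ℂ)) * (z + n) ^ k := by
  rw [calT_eq_eval_calTPoly, calTPoly_eq_factorialExpTrunc, factorialExpTrunc, eval_finsetSum]
  simp only [eval_mul, eval_C, eval_pow, eval_X]
end

section
/- For every natural number n, evaluating the polynomial \mathcal{T}_n at z = -n gives the factorial: \mathcal{T}_n(-n) = n!. -/
open Finset

/-! At `z = -n` the last factor of the `m`-th term of `𝒯 n` is `(-m)^(n-m)`, so the term becomes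
`(-1)^(n-m) C(n,m) m^n`, and `𝒯 n (-n)` is the `n`-th forward difference of `x ↦ x^n` at `0`,
which is `n!`. -/

theorem sum_range_neg_one_pow_mul_choose_mul_pow_self {R : Type*} [CommRing R] (n : ℕ) :
    ∑ k ∈ range (n + 1), (-1 : R) ^ (n - k) * n.choose k * (k : R) ^ n = n.factorial := by
  have h := congr_fun (fwdDiff_iter_eq_factorial (R := R) (n := n)) 0
  rw [fwdDiff_iter_eq_sum_shift] at h
  simpa [zsmul_eq_mul] using h

theorem calT_term_neg_self {n m : ℕ} (hm : m ≤ n) :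
    (n.choose m : ℂ) * (m : ℂ) ^ m * (((n - m : ℕ) : ℂ) + -(n : ℂ)) ^ (n - m)
      = (-1 : ℂ) ^ (n - m) * n.choose m * (m : ℂ) ^ n := by
  have hbase : ((n - m : ℕ) : ℂ) + -(n : ℂ) = -1 * (m : ℂ) := by
    push_cast [hm]
    ring
  rw [hbase, mul_pow, ← pow_mul_pow_sub (m : ℂ) hm]
  ring

theorem calT_neg_n (n : ℕ) : calT n (-(n : ℂ)) = (n.factorial : ℂ) := by
  rw [calT, ← sum_range_neg_one_pow_mul_choose_mul_pow_self]
  exact sum_congr rfl fun m hm => calT_term_neg_self (Nat.lt_succ_iff.mp (mem_range.mp hm))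
end

section
/- For every natural number n and all complex numbers x and z, the following identity holds: \sum_{m=0}^{n} \binom{n}{m} (m+x)^m (n-m+z-x)^{n-m} = \sum_{k=0}^{n} \frac{n!}{k!} (z + n)^k. -/
/-!
With `a = x + m` and `w = z + n` the second factor is `(w - a) ^ (n - m)`. Expanding it by the
binomial theorem and collecting the coefficient of `w ^ j`, what remains is, with `N = n - j`, the
alternating sum `∑ₘ (-1) ^ (N - m) * N.choose m * (x + m) ^ N`: the `N`-th forward difference of
`t ↦ t ^ N` at `x`, which is `N!`.
-/

open Finset

open scoped Nat

theorem Nat.choose_mul_choose_sub_comm (n i j : ℕ) :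
    n.choose i * (n - i).choose j = n.choose j * (n - j).choose i := by
  by_cases h : i + j ≤ n
  · have hi := Nat.choose_mul (n := n) (Nat.le_add_right i j)
    have hj := Nat.choose_mul (n := n) (Nat.le_add_left j i)
    rw [Nat.add_sub_cancel_left] at hi
    rw [Nat.add_sub_cancel] at hj
    rw [← hi, ← hj, Nat.choose_symm_add]
  · grind

variable {R : Type*} [CommRing R]

theorem sum_range_choose_mul_eq_of_le (f : ℕ → R) {N n : ℕ} (h : N ≤ n) :
    ∑ m ∈ range (n + 1), N.choose m * f m = ∑ m ∈ range (N + 1), N.choose m * f m :=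
  (sum_subset (range_subset_range.2 (by omega)) fun m _ hm => by
    rw [Nat.choose_eq_zero_of_lt (by simpa using hm), Nat.cast_zero, zero_mul]).symm

theorem sum_range_choose_mul_add_pow_mul_neg_pow (N : ℕ) (x : R) :
    ∑ m ∈ range (N + 1), N.choose m * (x + m) ^ m * (-(x + m)) ^ (N - m) = N ! := by
  have hdiff := fwdDiff_iter_eq_sum_shift 1 (fun t : R => t ^ N) N x
  rw [fwdDiff_iter_eq_factorial] at hdiff
  simp only [Pi.natCast_apply, nsmul_eq_mul, mul_one, zsmul_eq_mul] at hdiff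
  rw [hdiff]
  refine sum_congr rfl fun m hm => ?_
  have hpow : (x + m) ^ m * (x + m) ^ (N - m) = (x + m) ^ N := by
    rw [← pow_add, Nat.add_sub_cancel' (by simpa [Nat.lt_succ_iff] using hm)]
  rw [neg_pow]
  push_cast
  linear_combination (-1) ^ (N - m) * (N.choose m : R) * hpow

theorem choose_mul_sub_pow_eq_sum (n m : ℕ) (w a : R) :
    n.choose m * (w - a) ^ (n - m) =
      ∑ j ∈ range (n + 1), n.choose j * w ^ j * ((n - j).choose m * (-a) ^ (n - j - m)) := by
  rw [sub_eq_add_neg, add_pow, mul_sum]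
  calc
    _ = ∑ j ∈ range (n - m + 1), (n - m).choose j * (n.choose m * w ^ j * (-a) ^ (n - m - j)) :=
      sum_congr rfl fun j _ => by ring
    _ = _ := by
      rw [← sum_range_choose_mul_eq_of_le _ (n.sub_le m)]
      refine sum_congr rfl fun j _ => ?_
      have hchoose := congrArg (Nat.cast (R := R)) (Nat.choose_mul_choose_sub_comm n m j)
      push_cast at hchoose
      rw [Nat.sub_right_comm]
      linear_combination w ^ j * (-a) ^ (n - j - m) * hchoose

theorem sum_range_choose_mul_add_pow_mul_sub_pow (n : ℕ) (x w : R) :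
    ∑ m ∈ range (n + 1), n.choose m * (x + m) ^ m * (w - (x + m)) ^ (n - m) =
      ∑ j ∈ range (n + 1), n.choose j * (n - j)! * w ^ j := by
  calc
    _ = ∑ m ∈ range (n + 1), ∑ j ∈ range (n + 1),
          n.choose j * w ^ j * ((n - j).choose m * (x + m) ^ m * (-(x + m)) ^ (n - j - m)) := by
      refine sum_congr rfl fun m _ => ?_
      rw [mul_right_comm, choose_mul_sub_pow_eq_sum, sum_mul]
      exact sum_congr rfl fun j _ => by ring
    _ = ∑ j ∈ range (n + 1), n.choose j * w ^ j *
          ∑ m ∈ range (n - j + 1), (n - j).choose m * (x + m) ^ m * (-(x + m)) ^ (n - j - m) := by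
      rw [sum_comm]
      refine sum_congr rfl fun j _ => ?_
      simp_rw [mul_assoc ((n - j).choose _ : R)]
      rw [← mul_sum, sum_range_choose_mul_eq_of_le _ (n.sub_le j)]
    _ = _ := sum_congr rfl fun j _ => by
      rw [sum_range_choose_mul_add_pow_mul_neg_pow]; ring

theorem T_eq_factorial_sum (n : ℕ) (x z : ℂ) :
    ∑ m ∈ Finset.range (n + 1),
        (n.choose m : ℂ) * ((m : ℂ) + x) ^ m * (((n - m : ℕ) : ℂ) + z - x) ^ (n - m) =
      ∑ k ∈ Finset.range (n + 1), ((n.factorial : ℂ) / (k.factorial : ℂ)) * (z + n) ^ k := by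
  have hlhs : ∀ m ∈ range (n + 1), (n.choose m : ℂ) * ((m : ℂ) + x) ^ m *
      (((n - m : ℕ) : ℂ) + z - x) ^ (n - m) =
        n.choose m * (x + m) ^ m * ((z + n) - (x + m)) ^ (n - m) := fun m hm => by
    rw [Nat.cast_sub (by simpa [Nat.lt_succ_iff] using hm)]
    ring
  have hrhs : ∀ k ∈ range (n + 1), (n ! : ℂ) / k ! * (z + n) ^ k =
      n.choose k * (n - k)! * (z + n) ^ k := fun k hk => by
    rw [Nat.cast_choose ℂ (by simpa [Nat.lt_succ_iff] using hk)]
    field_simp [Nat.factorial_ne_zero]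
  rw [sum_congr rfl hlhs, sum_congr rfl hrhs, sum_range_choose_mul_add_pow_mul_sub_pow]
end
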